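/- For f, g in SL(2,C), \beta(f^2) = (\beta(f) + 4) \beta(f) and \gamma(f^2, g^2) = (\beta(f) + 4)(\beta(g) + 4) \gamma(f,g). -/

import Mathlib

/-!
In `SL(2, R)` the adjugate gives `A⁻¹ = (tr A) • 1 - A`, hence `A² = (tr A) • A - 1` and
`tr (A²) = (tr A)² - 2`, which is the identity for `β`. Substituting the same expressions for
`A²` and `A⁻²` into `A² B A⁻² B⁻¹` and taking traces shows `γ(A², B) = (tr A)² γ(A, B)`; since
`γ` is symmetric (the commutators `[A, B]` and `[B, A]` are mutually inverse), applying this in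
each variable gives the identity for `γ`.
-/

open Matrix

namespace Stmt5

/-- `β(h) = (tr h)² - 4` -/
noncomputable def β (h : SpecialLinearGroup (Fin 2) ℂ) : ℂ :=
  (Matrix.trace (h : Matrix (Fin 2) (Fin 2) ℂ)) ^ 2 - 4

/-- `γ(f,g) = tr (f g f⁻¹ g⁻¹) - 2` -/
noncomputable def γ (f g : SpecialLinearGroup (Fin 2) ℂ) : ℂ :=
  Matrix.trace ((f * g * f⁻¹ * g⁻¹ : SpecialLinearGroup (Fin 2) ℂ) :
    Matrix (Fin 2) (Fin 2) ℂ) - 2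

end Stmt5

theorem Matrix.adjugate_fin_two_eq_trace_smul_one_sub {R : Type*} [CommRing R]
    (M : Matrix (Fin 2) (Fin 2) R) : adjugate M = trace M • 1 - M := by
  ext i j
  fin_cases i <;> fin_cases j <;> simp [adjugate_fin_two, trace_fin_two]

namespace Matrix.SpecialLinearGroup

section Conj

variable {n R : Type*} [Fintype n] [DecidableEq n] [CommRing R]

local notation:1024 "↑ₘ" A:1024 => ((A : SpecialLinearGroup n R) : Matrix n n R)

theorem trace_coe_conj (A B : SpecialLinearGroup n R) :
    trace ↑ₘ(B * A * B⁻¹) = trace ↑ₘA := by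
  rw [coe_mul, coe_mul, trace_mul_cycle, ← coe_mul, inv_mul_cancel, coe_one, one_mul]

end Conj

variable {R : Type*} [CommRing R]

local notation:1024 "↑ₘ" A:1024 => ((A : SpecialLinearGroup (Fin 2) R) : Matrix (Fin 2) (Fin 2) R)

theorem coe_inv_fin_two (A : SpecialLinearGroup (Fin 2) R) :
    ↑ₘ(A⁻¹) = trace ↑ₘA • 1 - ↑ₘA := by
  rw [coe_inv, adjugate_fin_two_eq_trace_smul_one_sub]

theorem trace_inv_fin_two (A : SpecialLinearGroup (Fin 2) R) : trace ↑ₘ(A⁻¹) = trace ↑ₘA := by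
  rw [coe_inv_fin_two, trace_sub, trace_smul, trace_one, Fintype.card_fin, smul_eq_mul]
  ring

theorem coe_sq_fin_two (A : SpecialLinearGroup (Fin 2) R) :
    ↑ₘ(A ^ 2) = trace ↑ₘA • ↑ₘA - 1 := by
  have h : ↑ₘA * ↑ₘ(A⁻¹) = 1 := by rw [← coe_mul, mul_inv_cancel, coe_one]
  rw [coe_inv_fin_two, Matrix.mul_sub, Matrix.mul_smul, mul_one, sub_eq_iff_eq_add] at h
  rw [coe_pow, sq, h]
  abel

theorem trace_sq_fin_two (A : SpecialLinearGroup (Fin 2) R) :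
    trace ↑ₘ(A ^ 2) = trace ↑ₘA ^ 2 - 2 := by
  rw [coe_sq_fin_two, trace_sub, trace_smul, trace_one, Fintype.card_fin, smul_eq_mul]
  ring

theorem trace_commutator_comm_fin_two (A B : SpecialLinearGroup (Fin 2) R) :
    trace ↑ₘ(B * A * B⁻¹ * A⁻¹) = trace ↑ₘ(A * B * A⁻¹ * B⁻¹) := by
  have h : B * A * B⁻¹ * A⁻¹ = (A * B * A⁻¹ * B⁻¹)⁻¹ := by group
  rw [h, trace_inv_fin_two]

theorem trace_commutator_sq_left_fin_two (A B : SpecialLinearGroup (Fin 2) R) :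
    trace ↑ₘ(A ^ 2 * B * (A ^ 2)⁻¹ * B⁻¹) - 2 =
      trace ↑ₘA ^ 2 * (trace ↑ₘ(A * B * A⁻¹ * B⁻¹) - 2) := by
  have hBB : ↑ₘB * ↑ₘ(B⁻¹) = 1 := by rw [← coe_mul, mul_inv_cancel, coe_one]
  have hconj : trace ↑ₘ(B * A⁻¹ * B⁻¹) = trace ↑ₘA := by
    rw [trace_coe_conj, trace_inv_fin_two]
  rw [← inv_pow]
  simp only [coe_mul] at hconj ⊢
  rw [coe_sq_fin_two, coe_sq_fin_two, trace_inv_fin_two]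
  set t := trace ↑ₘA
  set a := ↑ₘA
  set a' := ↑ₘ(A⁻¹)
  set b := ↑ₘB
  set b' := ↑ₘ(B⁻¹)
  have expand : (t • a - 1) * b * (t • a' - 1) * b' =
      t ^ 2 • (a * b * a' * b') - t • (b * a' * b') - t • (a * (b * b')) + b * b' := by
    simp only [sub_mul, mul_sub, Matrix.smul_mul, Matrix.mul_smul, smul_smul, one_mul, mul_one,
      mul_assoc, sq]
    abel
  rw [expand, hBB, mul_one, trace_add, trace_sub, trace_sub, trace_smul, trace_smul, trace_smul,
    hconj, trace_one, Fintype.card_fin]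
  simp only [smul_eq_mul]
  push_cast
  ring

end Matrix.SpecialLinearGroup

namespace Stmt5

open Matrix.SpecialLinearGroup

theorem γ_comm (f g : SpecialLinearGroup (Fin 2) ℂ) : γ g f = γ f g := by
  rw [γ, γ, trace_commutator_comm_fin_two]

theorem γ_sq_left (f g : SpecialLinearGroup (Fin 2) ℂ) : γ (f ^ 2) g = (β f + 4) * γ f g := by
  rw [γ, γ, β, trace_commutator_sq_left_fin_two]
  ring

/-- `β(f²) = (β(f)+4) β(f)` and `γ(f²,g²) = (β(f)+4)(β(g)+4) γ(f,g)`. -/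
theorem beta_sq_and_gamma_sq (f g : SpecialLinearGroup (Fin 2) ℂ) :
    β (f ^ 2) = (β f + 4) * β f ∧
    γ (f ^ 2) (g ^ 2) = (β f + 4) * (β g + 4) * γ f g := by
  refine ⟨?_, ?_⟩
  · rw [β, β, trace_sq_fin_two]
    ring
  · rw [γ_sq_left, ← γ_comm, γ_sq_left, γ_comm]
    ring

end Stmt5
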